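/- Let W be a nonempty finite set of edges of G and, for x in the completion Ḡ, let U_W(x) be the set of points y ∈ Ḡ that can be connected to x by a path containing no edge of W. Then U_W(x) is both open and closed in Ḡ. -/

import Mathlib

/-!
All edges of `W` have resistance at least some `r > 0`. Two vertices at distance `< ρ ≤ r` are
joined by a path of length `< ρ`, which avoids `W` and stays within `ρ` of its start.
Concatenating such paths between vertices converging to a point `z` of `Ḡ` gives a `W`-avoiding
ray into `z` from every vertex within `r` of `z`. Splicing such a ray onto a `W`-avoiding path
from `x` (or onto a reversed ray into `x`) shows that `U_W(x)` contains the `r`-ball around each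
of its points, so it is open and closed.
-/

open UniformSpace Filter Topology
open scoped ENNReal

noncomputable section

/-- A locally finite edge-weighted (resistance) graph. -/
structure WGraph (V : Type*) where
  Adj : V → V → Prop
  symm : ∀ u v, Adj u v → Adj v u
  loopless : ∀ v, ¬ Adj v v
  R : V → V → ℝ
  Rsymm : ∀ u v, R u v = R v u
  Rpos : ∀ u v, Adj u v → 0 < R u v
  locFin : ∀ v, {u | Adj u v}.Finite

namespace WGraph

variable {V : Type*} (G : WGraph V)

/-- The set of edges, as unordered pairs of vertices. -/
def edgeSet : Set (Sym2 V) := {e | ∃ u v, G.Adj u v ∧ e = s(u, v)}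

/-- The set of total lengths of finite paths joining `u` to `v`. -/
def pathLengths (u v : V) : Set ℝ :=
  {L | ∃ (n : ℕ) (p : ℕ → V), p 0 = u ∧ p n = v ∧
        (∀ k < n, G.Adj (p k) (p (k + 1))) ∧
        L = ∑ k ∈ Finset.range n, G.R (p k) (p (k + 1))}

/-- `G` is connected: any two vertices are joined by a finite path. -/
def Connected : Prop := ∀ u v : V, (G.pathLengths u v).Nonempty

/-- The metric on the vertex set is the minimal resistance path metric of `G`. -/
def IsPathMetric [MetricSpace V] : Prop :=
  ∀ u v : V, dist u v = sInf (G.pathLengths u v)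

/-- Eventually flat functions: the values differ across only finitely many edges. -/
def EventuallyFlat (φ : V → ℝ) : Prop :=
  {p : V × V | G.Adj p.1 p.2 ∧ φ p.1 ≠ φ p.2}.Finite

open Classical in
/-- The conductance: the reciprocal resistance on edges, `0` off edges. -/
def cond (u v : V) : ℝ := if G.Adj u v then (G.R u v)⁻¹ else 0

/-- `f` is harmonic at `v`: its value is the conductance-weighted average of the
values at the adjacent vertices. -/
def HarmonicAt (f : V → ℝ) (v : V) : Prop :=
  f v = (∑ u ∈ (G.locFin v).toFinset, G.cond u v)⁻¹ *
          ∑ u ∈ (G.locFin v).toFinset, G.cond u v * f u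

/-- The weighted `ℓ²(μ)` inner product. -/
def winner (μ : V → ℝ) (f g : V → ℝ) : ℝ := ∑' v, f v * g v * μ v

/-- The bilinear (energy) form associated to conductances `C`. -/
def Bform (C : V → V → ℝ) (f g : V → ℝ) : ℝ :=
  (1 / 2) * ∑' p : V × V, C p.1 p.2 * (f p.1 - f p.2) * (g p.1 - g p.2)

/-- The formal Laplacian `Δ_μ`. -/
def lap (C : V → V → ℝ) (μ : V → ℝ) (f : V → ℝ) (v : V) : ℝ :=
  (1 / μ v) * ∑' u, C u v * (f v - f u)

/-- The (possibly infinite) energy of `f`. -/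
def energy (C : V → V → ℝ) (f : V → ℝ) : ℝ≥0∞ :=
  (1 / 2) * ∑' p : V × V, ENNReal.ofReal (C p.1 p.2 * (f p.1 - f p.2) ^ 2)

variable [MetricSpace V]

/-- A path in the completion `Ḡ` joining `x` and `y`: a two-sided sequence of
vertices (stationary steps are allowed, so this encodes finite paths, rays and
double rays) converging to `x` and `y` at its two ends. -/
structure CPath (x y : Completion V) where
  p : ℤ → V
  step : ∀ k, p k = p (k + 1) ∨ G.Adj (p k) (p (k + 1))
  tendsto_left : Tendsto (fun n : ℕ => ((p (-(n : ℤ)) : V) : Completion V)) atTop (nhds x)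
  tendsto_right : Tendsto (fun n : ℕ => ((p (n : ℤ) : V) : Completion V)) atTop (nhds y)

end WGraph

/-- The path `γ` uses (contains) the edge `e`. -/
def WGraph.CPath.uses {V : Type*} [MetricSpace V] {G : WGraph V}
    {x y : Completion V} (γ : G.CPath x y) (e : Sym2 V) : Prop :=
  ∃ k : ℤ, γ.p k ≠ γ.p (k + 1) ∧ e = s(γ.p k, γ.p (k + 1))

namespace WGraph

variable {V : Type*} (G : WGraph V) [MetricSpace V]

/-- The completion `Ḡ` is weakly connected: any two distinct points admit a
finite set of edges met by every path joining them. -/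
def WeaklyConnected : Prop :=
  ∀ x y : Completion V, x ≠ y →
    ∃ W : Set (Sym2 V), W.Finite ∧ W ⊆ G.edgeSet ∧
      ∀ γ : G.CPath x y, ∃ e ∈ W, γ.uses e

end WGraph

section Sequences

variable {α : Type*} {r : α → α → Prop}

/-- The position `(block, offset)` after `m` steps through blocks of lengths `L 0, L 1, …`;
passing from the end of one block to the start of the next takes a step of its own. -/
def concatIndex (L : ℕ → ℕ) (m : ℕ) : ℕ × ℕ :=
  (fun s : ℕ × ℕ => if s.2 < L s.1 then (s.1, s.2 + 1) else (s.1 + 1, 0))^[m] (0, 0)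

lemma concatIndex_succ (L : ℕ → ℕ) (m : ℕ) :
    concatIndex L (m + 1) =
      if (concatIndex L m).2 < L (concatIndex L m).1 then
        ((concatIndex L m).1, (concatIndex L m).2 + 1)
      else ((concatIndex L m).1 + 1, 0) :=
  Function.iterate_succ_apply' _ _ _

lemma concatIndex_snd_le (L : ℕ → ℕ) (m : ℕ) : (concatIndex L m).2 ≤ L (concatIndex L m).1 := by
  induction m with
  | zero => simp [concatIndex]
  | succ m ih =>
    rw [concatIndex_succ]
    split_ifs with h
    · exact h
    · exact Nat.zero_le _

lemma concatIndex_fst_le_succ (L : ℕ → ℕ) (m : ℕ) :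
    (concatIndex L m).1 ≤ (concatIndex L (m + 1)).1 := by
  rw [concatIndex_succ]
  split_ifs <;> simp

lemma concatIndex_add {L : ℕ → ℕ} {m n : ℕ} (hm : concatIndex L m = (n, 0)) {j : ℕ}
    (hj : j ≤ L n) : concatIndex L (m + j) = (n, j) := by
  induction j with
  | zero => exact hm
  | succ j ih =>
    rw [← add_assoc, concatIndex_succ, ih (by omega)]
    simp [show j < L n by omega]

lemma exists_concatIndex_eq (L : ℕ → ℕ) (n : ℕ) : ∃ m, concatIndex L m = (n, 0) := by
  induction n with
  | zero => exact ⟨0, rfl⟩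
  | succ n ih =>
    obtain ⟨m, hm⟩ := ih
    refine ⟨m + L n + 1, ?_⟩
    rw [concatIndex_succ, concatIndex_add hm le_rfl]
    simp

lemma tendsto_concatIndex_fst (L : ℕ → ℕ) :
    Tendsto (fun m => (concatIndex L m).1) atTop atTop :=
  tendsto_atTop_atTop_of_monotone (monotone_nat_of_le_succ (concatIndex_fst_le_succ L))
    fun n => (exists_concatIndex_eq L n).imp fun _ hm => by rw [hm]

theorem exists_seq_of_chains (hr : ∀ a, r a a) (L : ℕ → ℕ) (P : ℕ → ℕ → α)
    (hP : ∀ n, ∀ k < L n, r (P n k) (P n (k + 1))) (hglue : ∀ n, P n (L n) = P (n + 1) 0) :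
    ∃ (q : ℕ → α) (blk : ℕ → ℕ), q 0 = P 0 0 ∧ (∀ m, r (q m) (q (m + 1))) ∧
      Tendsto blk atTop atTop ∧ ∀ m, ∃ k ≤ L (blk m), q m = P (blk m) k := by
  refine ⟨fun m => P (concatIndex L m).1 (concatIndex L m).2, fun m => (concatIndex L m).1, rfl,
    fun m => ?_, tendsto_concatIndex_fst L, fun m => ⟨_, concatIndex_snd_le L m, rfl⟩⟩
  have hk := concatIndex_snd_le L m
  dsimp only
  rw [concatIndex_succ]
  generalize concatIndex L m = s at hk ⊢
  obtain ⟨n, k⟩ := s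
  split_ifs with h
  · exact hP n k h
  · obtain rfl : k = L n := by dsimp only at hk h; omega
    rw [hglue]
    exact hr _

theorem exists_intSeq_splice {p : ℤ → α} {q : ℕ → α} (N : ℕ)
    (hp : ∀ k < (N : ℤ), r (p k) (p (k + 1))) (hq : ∀ n, r (q n) (q (n + 1))) (h0 : q 0 = p N) :
    ∃ s : ℤ → α, (∀ k, r (s k) (s (k + 1))) ∧ (∀ n : ℕ, s (-n) = p (-n)) ∧
      ∀ n ≥ N, s n = q (n - N) := by
  refine ⟨fun k => if k ≤ N then p k else q (k - N).toNat, fun k => ?_,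
    fun n => if_pos (by omega), fun n hn => ?_⟩
  · rcases lt_trichotomy k N with hk | rfl | hk
    · simp only [if_pos hk.le, if_pos (show k + 1 ≤ N by omega)]
      exact hp k hk
    · simpa [h0] using hq 0
    · simp only [if_neg (show ¬k ≤ N by omega), if_neg (show ¬k + 1 ≤ N by omega)]
      convert hq (k - N).toNat using 2
      omega
  · rcases hn.eq_or_lt with rfl | hn
    · simp [h0]
    · simp only [if_neg (show ¬(n : ℤ) ≤ N by omega)]
      congr 1
      omega

theorem exists_intSeq_reverse (hr : ∀ a, r a a) (hsymm : ∀ a b, r a b → r b a) {q : ℕ → α}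
    (hq : ∀ n, r (q n) (q (n + 1))) :
    ∃ p : ℤ → α, (∀ k, r (p k) (p (k + 1))) ∧ ∀ n : ℕ, p (-n) = q n := by
  refine ⟨fun k => q (-k).toNat, fun k => ?_, fun n => by simp⟩
  rcases lt_or_ge k 0 with hk | hk
  · convert hsymm _ _ (hq (-(k + 1)).toNat) using 2
    omega
  · simp only [show (-k).toNat = 0 by omega, show (-(k + 1)).toNat = 0 by omega]
    exact hr _

end Sequences

theorem Metric.isClopen_of_forall_ball_subset {X : Type*} [PseudoMetricSpace X] {s : Set X}
    {r : ℝ} (hr : 0 < r) (h : ∀ y ∈ s, Metric.ball y r ⊆ s) : IsClopen s := by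
  refine ⟨isClosed_of_closure_subset fun z hz => ?_,
    Metric.isOpen_iff.2 fun y hy => ⟨r, hr, h y hy⟩⟩
  obtain ⟨y, hy, hzy⟩ := Metric.mem_closure_iff.1 hz r hr
  exact h y hy (Metric.mem_ball.2 hzy)

namespace WGraph

section

variable {V : Type*} (G : WGraph V)

lemma bddBelow_pathLengths (u v : V) : BddBelow (G.pathLengths u v) := by
  refine ⟨0, ?_⟩
  rintro _ ⟨n, p, -, -, hadj, rfl⟩
  exact Finset.sum_nonneg fun k hk => (G.Rpos _ _ (hadj k (Finset.mem_range.mp hk))).le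

def AvoidingStep (W : Set (Sym2 V)) (u v : V) : Prop := u = v ∨ (G.Adj u v ∧ s(u, v) ∉ W)

variable {G} {W : Set (Sym2 V)}

lemma avoidingStep_refl (u : V) : G.AvoidingStep W u u := Or.inl rfl

lemma AvoidingStep.symm {u v : V} (h : G.AvoidingStep W u v) : G.AvoidingStep W v u :=
  h.imp Eq.symm fun ⟨hadj, hW⟩ => ⟨G.symm _ _ hadj, Sym2.eq_swap ▸ hW⟩

lemma exists_pos_forall_le_R (hWfin : W.Finite) (hWsub : W ⊆ G.edgeSet) :
    ∃ r > 0, ∀ u v, s(u, v) ∈ W → r ≤ G.R u v := by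
  have hpos : ∀ e ∈ W, 0 < Sym2.lift ⟨G.R, G.Rsymm⟩ e := by
    intro e he
    obtain ⟨u, v, huv, rfl⟩ := hWsub he
    exact G.Rpos u v huv
  have hsmall : ∀ᶠ ρ in 𝓝[>] (0 : ℝ), ∀ e ∈ W, ρ < Sym2.lift ⟨G.R, G.Rsymm⟩ e :=
    nhdsWithin_le_nhds (hWfin.eventually_all.2 fun e he => eventually_lt_nhds (hpos e he))
  obtain ⟨r, hr, hr0⟩ := (hsmall.and self_mem_nhdsWithin).exists
  exact ⟨r, hr0, fun u v huv => (hr _ huv).le⟩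

end

variable {V : Type*} [MetricSpace V] {G : WGraph V}

lemma exists_path_length_lt (hmet : G.IsPathMetric) (hconn : G.Connected) {u v : V} {c : ℝ}
    (h : dist u v < c) :
    ∃ (n : ℕ) (p : ℕ → V), p 0 = u ∧ p n = v ∧ (∀ k < n, G.Adj (p k) (p (k + 1))) ∧
      ∑ k ∈ Finset.range n, G.R (p k) (p (k + 1)) < c := by
  rw [hmet, csInf_lt_iff (G.bddBelow_pathLengths u v) (hconn u v)] at h
  obtain ⟨_, ⟨n, p, h0, hn, hadj, rfl⟩, hc⟩ := h
  exact ⟨n, p, h0, hn, hadj, hc⟩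

lemma dist_le_path_length (hmet : G.IsPathMetric) {n : ℕ} {p : ℕ → V}
    (hadj : ∀ k < n, G.Adj (p k) (p (k + 1))) {j : ℕ} (hj : j ≤ n) :
    dist (p 0) (p j) ≤ ∑ k ∈ Finset.range n, G.R (p k) (p (k + 1)) :=
  calc dist (p 0) (p j) ≤ ∑ k ∈ Finset.range j, G.R (p k) (p (k + 1)) := by
        rw [hmet]
        exact csInf_le (G.bddBelow_pathLengths _ _)
          ⟨j, p, rfl, rfl, fun k hk => hadj k (hk.trans_le hj), rfl⟩
    _ ≤ ∑ k ∈ Finset.range n, G.R (p k) (p (k + 1)) :=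
        Finset.sum_le_sum_of_subset_of_nonneg (Finset.range_subset_range.mpr hj)
          fun k hk _ => (G.Rpos _ _ (hadj k (Finset.mem_range.mp hk))).le

variable {W : Set (Sym2 V)}

lemma CPath.forall_not_uses_iff {x y : Completion V} (γ : G.CPath x y) :
    (∀ e ∈ W, ¬ γ.uses e) ↔ ∀ k, G.AvoidingStep W (γ.p k) (γ.p (k + 1)) := by
  refine ⟨fun h k => (γ.step k).imp_right fun hadj => ⟨hadj, fun hW => ?_⟩, ?_⟩
  · exact h _ hW ⟨k, fun heq => G.loopless _ (heq ▸ hadj), rfl⟩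
  · rintro h e he ⟨k, hne, rfl⟩
    exact (h k).elim hne fun h' => h'.2 he

variable (G) in
/-- The set `U_W(x)` of the paper. -/
def avoidingReach (W : Set (Sym2 V)) (x : Completion V) : Set (Completion V) :=
  {y | y = x ∨ ∃ γ : G.CPath x y, ∀ e ∈ W, ¬ γ.uses e}

lemma mem_avoidingReach_of_seq {x y : Completion V} {p : ℤ → V}
    (hp : ∀ k, G.AvoidingStep W (p k) (p (k + 1)))
    (hx : Tendsto (fun n : ℕ => ((p (-(n : ℤ)) : V) : Completion V)) atTop (𝓝 x))
    (hy : Tendsto (fun n : ℕ => ((p (n : ℤ) : V) : Completion V)) atTop (𝓝 y)) :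
    y ∈ G.avoidingReach W x :=
  let γ : G.CPath x y := ⟨p, fun k => (hp k).imp_right And.left, hx, hy⟩
  Or.inr ⟨γ, γ.forall_not_uses_iff.mpr hp⟩

variable {r : ℝ}

lemma exists_avoiding_chain (hmet : G.IsPathMetric) (hconn : G.Connected)
    (hW : ∀ u v, s(u, v) ∈ W → r ≤ G.R u v) {u v : V} {ε : ℝ} (h : dist u v < ε) (hε : ε ≤ r) :
    ∃ (n : ℕ) (p : ℕ → V), p 0 = u ∧ p n = v ∧ (∀ k < n, G.AvoidingStep W (p k) (p (k + 1))) ∧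
      ∀ k ≤ n, dist u (p k) < ε := by
  obtain ⟨n, p, h0, hn, hadj, hlen⟩ := exists_path_length_lt hmet hconn h
  have hR : ∀ k < n, G.R (p k) (p (k + 1)) < ε := fun k hk =>
    (Finset.single_le_sum (fun i hi => (G.Rpos _ _ (hadj i (Finset.mem_range.mp hi))).le)
      (Finset.mem_range.mpr hk)).trans_lt hlen
  refine ⟨n, p, h0, hn, fun k hk => Or.inr ⟨hadj k hk, fun hkW => ?_⟩,
    fun k hk => h0 ▸ (dist_le_path_length hmet hadj hk).trans_lt hlen⟩
  exact (hR k hk).not_ge (hε.trans (hW _ _ hkW))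

lemma exists_vertex_seq_tendsto {z : Completion V} {a : V} (h : dist (a : Completion V) z < r) :
    ∃ (v : ℕ → V) (ε : ℕ → ℝ), v 0 = a ∧ (∀ n, dist (v n) (v (n + 1)) < ε n) ∧
      (∀ n, ε n ≤ r) ∧ Tendsto (fun n => ε n + dist (v n : Completion V) z) atTop (𝓝 0) := by
  set c := r - dist (a : Completion V) z with hc_def
  have hc : 0 < c := sub_pos.2 h
  have hc_lim : Tendsto (fun n : ℕ => c / (n + 1)) atTop (𝓝 0) := by
    simpa [div_eq_mul_inv] using tendsto_one_div_add_atTop_nhds_zero_nat.const_mul c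
  choose w hw using fun n : ℕ =>
    Metric.denseRange_iff.1 Completion.denseRange_coe z (c / (n + 1)) (by positivity)
  let v : ℕ → V := fun n => if n = 0 then a else w n
  have hv : ∀ n, dist (v (n + 1) : Completion V) z < c / ((n + 1 : ℕ) + 1) := fun n => by
    simpa [v, dist_comm] using hw (n + 1)
  refine ⟨v, fun n => dist (v n : Completion V) z + c / (n + 1), rfl, fun n => ?_, fun n => ?_, ?_⟩
  · rw [← Completion.dist_eq]
    calc _ ≤ dist (v n : Completion V) z + dist (v (n + 1) : Completion V) z :=
          dist_triangle_right _ _ _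
      _ < dist (v n : Completion V) z + c / (n + 1) := by
        gcongr
        exact (hv n).trans_le (div_le_div_of_nonneg_left hc.le (by positivity) (by simp))
  · cases n with
    | zero => simp [v, c]
    | succ n =>
      have h2 : c / ((n + 1 : ℕ) + 1 : ℝ) ≤ c / 2 :=
        div_le_div_of_nonneg_left hc.le two_pos (by push_cast; linarith [n.cast_nonneg (α := ℝ)])
      linarith [hv n, dist_nonneg (x := (a : Completion V)) (y := z)]
  · have hd : Tendsto (fun n => dist (v n : Completion V) z) atTop (𝓝 0) := by
      refine squeeze_zero' (.of_forall fun _ => dist_nonneg) ?_ hc_lim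
      filter_upwards [eventually_ge_atTop 1] with n hn
      obtain ⟨n, rfl⟩ := Nat.exists_eq_add_of_le' hn
      exact (hv n).le
    simpa using (hd.add hc_lim).add hd

lemma exists_avoiding_ray (hmet : G.IsPathMetric) (hconn : G.Connected)
    (hW : ∀ u v, s(u, v) ∈ W → r ≤ G.R u v) {z : Completion V} {a : V}
    (h : dist (a : Completion V) z < r) :
    ∃ q : ℕ → V, q 0 = a ∧ (∀ m, G.AvoidingStep W (q m) (q (m + 1))) ∧
      Tendsto (fun m => (q m : Completion V)) atTop (𝓝 z) := by
  obtain ⟨v, ε, rfl, hv, hε, hlim⟩ := exists_vertex_seq_tendsto h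
  choose L P hP0 hPL hP hPdist using fun n => exists_avoiding_chain hmet hconn hW (hv n) (hε n)
  obtain ⟨q, blk, hq0, hq, hblk, hqP⟩ := exists_seq_of_chains avoidingStep_refl L P hP
    fun n => (hPL n).trans (hP0 (n + 1)).symm
  refine ⟨q, hq0.trans (hP0 0), hq, tendsto_iff_dist_tendsto_zero.2 <|
    squeeze_zero (fun _ => dist_nonneg) (fun m => ?_) (hlim.comp hblk)⟩
  obtain ⟨k, hk, hqm⟩ := hqP m
  calc dist (q m : Completion V) z
      ≤ dist (q m : Completion V) (v (blk m)) + dist (v (blk m) : Completion V) z :=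
        dist_triangle _ _ _
    _ ≤ ε (blk m) + dist (v (blk m) : Completion V) z := by
        rw [Completion.dist_eq, hqm, dist_comm]
        gcongr
        exact (hPdist _ k hk).le

lemma ball_subset_avoidingReach (hmet : G.IsPathMetric) (hconn : G.Connected)
    (hW : ∀ u v, s(u, v) ∈ W → r ≤ G.R u v) {x y : Completion V}
    (hy : y ∈ G.avoidingReach W x) : Metric.ball y r ⊆ G.avoidingReach W x := by
  intro z hz
  rw [Metric.mem_ball, dist_comm] at hz
  obtain ⟨p, N, hp, hpx, hpN⟩ : ∃ (p : ℤ → V) (N : ℕ),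
      (∀ k, G.AvoidingStep W (p k) (p (k + 1))) ∧
      Tendsto (fun n : ℕ => ((p (-(n : ℤ)) : V) : Completion V)) atTop (𝓝 x) ∧
      dist ((p N : V) : Completion V) z < r := by
    rcases hy with rfl | ⟨γ, hγ⟩
    · -- a ray from a vertex near `x` into `x`, run backwards, serves as the path
      obtain ⟨a, ha⟩ :=
        Metric.denseRange_iff.1 Completion.denseRange_coe y (r - dist y z) (sub_pos.2 hz)
      rw [dist_comm] at ha
      obtain ⟨q, hq0, hq, hqy⟩ := exists_avoiding_ray hmet hconn hW (z := y) (a := a)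
        (by linarith [dist_nonneg (x := y) (y := z)])
      obtain ⟨p, hp, hpq⟩ :=
        exists_intSeq_reverse avoidingStep_refl (fun _ _ => AvoidingStep.symm) hq
      refine ⟨p, 0, hp, by simpa only [hpq] using hqy, ?_⟩
      have hp0 : p 0 = a := by simpa [hq0] using hpq 0
      rw [Nat.cast_zero, hp0]
      linarith [dist_triangle (a : Completion V) y z]
    · obtain ⟨N, hN⟩ := Metric.tendsto_atTop.1 γ.tendsto_right _ (sub_pos.2 hz)
      refine ⟨γ.p, N, γ.forall_not_uses_iff.1 hγ, γ.tendsto_left, ?_⟩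
      linarith [hN N le_rfl, dist_triangle ((γ.p N : V) : Completion V) y z]
  obtain ⟨q, hq0, hq, hqz⟩ := exists_avoiding_ray hmet hconn hW hpN
  obtain ⟨s, hs, hsp, hsq⟩ := exists_intSeq_splice N (fun k _ => hp k) hq hq0
  refine mem_avoidingReach_of_seq hs (by simpa only [hsp] using hpx) ?_
  refine (hqz.comp (tendsto_sub_atTop_nat N)).congr' ?_
  filter_upwards [eventually_ge_atTop N] with n hn
  simp [hsq n hn]

end WGraph

theorem UW_isClopen_general {V : Type*} [MetricSpace V]
    (G : WGraph V) (hmet : G.IsPathMetric) (hconn : G.Connected)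
    (W : Set (Sym2 V)) (hWfin : W.Finite) (hWsub : W ⊆ G.edgeSet)
    (x : UniformSpace.Completion V) :
    IsClopen {y : UniformSpace.Completion V |
      y = x ∨ ∃ γ : G.CPath x y, ∀ e ∈ W, ¬ γ.uses e} := by
  obtain ⟨r, hr, hW⟩ := WGraph.exists_pos_forall_le_R hWfin hWsub
  exact Metric.isClopen_of_forall_ball_subset hr fun y hy =>
    WGraph.ball_subset_avoidingReach hmet hconn hW (x := x) hy

/-- for a nonempty finite edge set `W` and `x` in the completion,
the set `U_W(x)` of points joined to `x` by some path avoiding `W` is clopen. -/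
theorem UW_isClopen {V : Type*} [MetricSpace V] [Countable V]
    (G : WGraph V) (hmet : G.IsPathMetric) (hconn : G.Connected)
    (W : Set (Sym2 V)) (hWfin : W.Finite) (hWsub : W ⊆ G.edgeSet)
    (hWne : W.Nonempty) (x : UniformSpace.Completion V) :
    IsClopen {y : UniformSpace.Completion V |
      y = x ∨ ∃ γ : G.CPath x y, ∀ e ∈ W, ¬ γ.uses e} :=
  UW_isClopen_general G hmet hconn W hWfin hWsub x
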